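/- arXiv:1205.1778 — 2 statements merged into one kernel-verified Lean document; each statement's English description precedes it below -/
import Mathlib

section
/- Let q be an alternating permutation of length n avoiding the pattern 12⋯(k-2)k(k-1). Then every entry of q of rank at least k-1 is a peak of q. -/
open Function

def Contains {n k : ℕ} (p : Fin n → Fin n) (q : Fin k → Fin k) : Prop :=
  ∃ f : Fin k → Fin n, StrictMono f ∧ ∀ a b : Fin k, q a < q b ↔ p (f a) < p (f b)

def Avoids {n k : ℕ} (p : Fin n → Fin n) (q : Fin k → Fin k) : Prop :=
  ¬ Contains p q

noncomputable def rank {n : ℕ} (p : Fin n → Fin n) (i : Fin n) : ℕ :=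
  sSup {m | ∃ f : Fin m → Fin n, StrictMono f ∧ StrictMono (p ∘ f) ∧
    ∃ hm : 0 < m, f ⟨m - 1, Nat.sub_lt hm Nat.one_pos⟩ = i}

noncomputable def corank {n : ℕ} (p : Fin n → Fin n) (i : Fin n) : ℕ :=
  sSup {m | ∃ f : Fin m → Fin n, StrictMono f ∧ StrictMono (p ∘ f) ∧
    ∃ hm : 0 < m, f ⟨0, hm⟩ = i}

def Alternating {n : ℕ} (p : Fin n → Fin n) : Prop :=
  ∀ (i : ℕ) (h : i + 1 < n), p ⟨i, by omega⟩ < p ⟨i + 1, h⟩ ↔ i % 2 = 0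

def IsPeak {n : ℕ} (p : Fin n → Fin n) (i : Fin n) : Prop :=
  (∀ _ : 0 < i.1, p ⟨i.1 - 1, lt_of_le_of_lt (Nat.sub_le _ _) i.2⟩ < p i) ∧
  (∀ h : i.1 + 1 < n, p ⟨i.1 + 1, h⟩ < p i)

def IsValley {n : ℕ} (p : Fin n → Fin n) (i : Fin n) : Prop :=
  (∀ _ : 0 < i.1, p i < p ⟨i.1 - 1, lt_of_le_of_lt (Nat.sub_le _ _) i.2⟩) ∧
  (∀ h : i.1 + 1 < n, p i < p ⟨i.1 + 1, h⟩)

/-! If `q (i - 1) > q i`, then `k - 2` entries of an increasing subsequence ending at `i`,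
followed by the entries at `i - 1` and `i`, form the pattern `12⋯(k-2)k(k-1)`: the increasing
entries lie left of `i - 1` since their values are below `q i < q (i - 1)`. So `i` ends an ascent,
and alternation makes the next step a descent. -/

lemma Fin.strictMono_snoc {α : Type*} [Preorder α] {m : ℕ} {f : Fin m → α} (hf : StrictMono f)
    {x : α} (hx : ∀ j, f j < x) : StrictMono (Fin.snoc (α := fun _ ↦ α) f x) := by
  intro a b hab
  induction b using Fin.lastCases with
  | last =>
    obtain ⟨a, rfl⟩ := Fin.exists_castSucc_eq.2 (Fin.ne_last_of_lt hab)
    simpa using hx a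
  | cast b =>
    obtain ⟨a, rfl⟩ :=
      Fin.exists_castSucc_eq.2 (Fin.ne_last_of_lt (hab.trans (Fin.castSucc_lt_last b)))
    simpa using hf (Fin.castSucc_lt_castSucc_iff.1 hab)

section Patterns

variable {n k : ℕ} {p : Fin n → Fin n}

theorem contains_of_strictMono_comp_symm (σ : Equiv.Perm (Fin k)) {f : Fin k → Fin n}
    (hf : StrictMono f) (hσ : StrictMono (p ∘ f ∘ σ.symm)) : Contains p σ :=
  ⟨f, hf, fun a b ↦ by simpa using (hσ.lt_iff_lt (a := σ a) (b := σ b)).symm⟩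

theorem exists_strictMono_lt_of_lt_rank {m : ℕ} {i : Fin n} (hm : m < rank p i) :
    ∃ g : Fin m → Fin n, StrictMono g ∧ StrictMono (p ∘ g) ∧ ∀ j, g j < i ∧ p (g j) < p i := by
  obtain ⟨f, hf, hpf, hr, hlast⟩ : rank p i ∈ {m | ∃ f : Fin m → Fin n, StrictMono f ∧
      StrictMono (p ∘ f) ∧ ∃ hm : 0 < m, f ⟨m - 1, Nat.sub_lt hm Nat.one_pos⟩ = i} :=
    Nat.sSup_mem ⟨1, fun _ ↦ i, Subsingleton.strictMono _, Subsingleton.strictMono _, one_pos, rfl⟩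
      ⟨n, fun m ⟨f, hf, _⟩ ↦ by simpa using Fintype.card_le_of_injective f hf.injective⟩
  refine ⟨f ∘ Fin.castLE hm.le, hf.comp (Fin.strictMono_castLE _),
    hpf.comp (Fin.strictMono_castLE _), fun j ↦ ?_⟩
  have hj : Fin.castLE hm.le j < ⟨rank p i - 1, Nat.sub_lt hr Nat.one_pos⟩ := by
    rw [Fin.lt_def]; simp only [Fin.val_castLE]; omega
  exact ⟨(hf hj).trans_eq hlast, (hpf hj).trans_eq (congrArg p hlast)⟩

theorem contains_swap_last_of_lt {m : ℕ} {g : Fin m → Fin n} (hg : StrictMono g)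
    (hpg : StrictMono (p ∘ g)) {a b : Fin n} (hab : a < b) (hga : ∀ j, g j < a)
    (hgb : ∀ j, p (g j) < p b) (hba : p b < p a) :
    Contains p (Equiv.swap (Fin.last m).castSucc (Fin.last (m + 1))) := by
  let f : Fin (m + 2) → Fin n := Fin.snoc (Fin.snoc g a : Fin (m + 1) → Fin n) b
  have hf : StrictMono f := Fin.strictMono_snoc (Fin.strictMono_snoc hg hga)
    (Fin.lastCases (by simpa using hab) fun j ↦ by simpa using (hga j).trans hab)
  refine contains_of_strictMono_comp_symm _ hf ?_
  have hswap : p ∘ f ∘ (Equiv.swap (Fin.last m).castSucc (Fin.last (m + 1))).symm =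
      Fin.snoc (Fin.snoc (p ∘ g) (p b) : Fin (m + 1) → Fin n) (p a) := by
    funext j
    induction j using Fin.lastCases with
    | last => simp [f]
    | cast j =>
      induction j using Fin.lastCases with
      | last => simp [f]
      | cast j => simp [f, Equiv.swap_apply_of_ne_of_ne]
  rw [hswap]
  exact Fin.strictMono_snoc (Fin.strictMono_snoc hpg hgb)
    (Fin.lastCases (by simpa using hba) fun j ↦ by simpa using (hgb j).trans hba)

theorem val_pos_of_one_lt_rank {i : Fin n} (hr : 1 < rank p i) : 0 < i.1 := by
  obtain ⟨g, -, -, hgi⟩ := exists_strictMono_lt_of_lt_rank hr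
  exact (Nat.zero_le _).trans_lt (hgi 0).1

theorem Avoids.pred_lt_of_lt_rank {m : ℕ} (hp : Injective p)
    (hav : Avoids p (Equiv.swap (Fin.last m).castSucc (Fin.last (m + 1)))) {i : Fin n}
    (hr : m < rank p i) (hi : 0 < i.1) : p ⟨i.1 - 1, by omega⟩ < p i := by
  obtain ⟨g, hg, hpg, hgi⟩ := exists_strictMono_lt_of_lt_rank hr
  set a : Fin n := ⟨i.1 - 1, by omega⟩
  have hai : a < i := Fin.lt_def.2 (by simp only [a]; omega)
  refine (lt_or_gt_of_ne (hp.ne hai.ne)).resolve_right fun hia ↦ hav ?_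
  refine contains_swap_last_of_lt hg hpg hai (fun j ↦ ?_) (fun j ↦ (hgi j).2) hia
  have hga : g j ≠ a := fun h ↦ ((hgi j).2.trans hia).ne (congrArg p h)
  have hgi' := Fin.lt_def.1 (hgi j).1
  exact lt_of_le_of_ne (Fin.le_def.2 (by simp only [a]; omega)) hga

end Patterns

theorem Alternating.isPeak_of_pred_lt {n : ℕ} {p : Fin n → Fin n} (halt : Alternating p)
    (hp : Injective p) {i : Fin n} (hi : 0 < i.1) (hlt : p ⟨i.1 - 1, by omega⟩ < p i) :
    IsPeak p i := by
  refine ⟨fun _ ↦ hlt, fun h ↦ ?_⟩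
  have hpred : (i.1 - 1) % 2 = 0 := (halt (i.1 - 1) (by omega)).1 <| by
    convert hlt using 2; ext; simp only; omega
  have hnot : ¬ p i < p ⟨i.1 + 1, h⟩ := fun hup ↦ by have := (halt i.1 h).1 hup; omega
  exact lt_of_le_of_ne (not_lt.1 hnot) (hp.ne (Fin.ne_of_val_ne (by simp)))

theorem stmt6 (n k : ℕ) (hk : 3 ≤ k) (q : Fin n → Fin n) (hq : Function.Bijective q)
    (halt : Alternating q)
    (hav : Avoids q ⇑(Equiv.swap (⟨k - 2, by omega⟩ : Fin k) ⟨k - 1, by omega⟩))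
    (i : Fin n) (hr : k - 1 ≤ rank q i) : IsPeak q i := by
  obtain ⟨m, rfl⟩ : ∃ m, k = m + 2 := ⟨k - 2, by omega⟩
  have hav' : Avoids q (Equiv.swap (Fin.last m).castSucc (Fin.last (m + 1))) := by
    convert hav using 3 <;> ext <;> simp
  have hi : 0 < i.1 := val_pos_of_one_lt_rank (p := q) (by omega)
  exact halt.isPeak_of_pred_lt hq.injective hi (hav'.pred_lt_of_lt_rank hq.injective (by omega) hi)
end

section
/- For every positive integer n, the number of alternating permutations of length n avoiding 1234 equals the number of alternating permutations of length n avoiding 2134. -/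
open Function

/-!
Call a cell `(i, v)` of the diagram of `p` a board cell if an ascent `p j₁ < p j₂` lies strictly
north-east of it (`i < j₁ < j₂`, `v < p j₁`). The board is a Ferrers shape, and the entries of `p`
lying on it (the `1`s of `123` patterns) form a full rook placement on their rows and columns.
Replacing them by any other such placement changes neither the board nor the entries off it.
A permutation avoids `1234` iff its board entries decrease, and avoids `2134` iff no two board
entries form an inversion whose corner is a board cell; on a Ferrers board each kind of full
placement exists and is unique, so exchanging one for the other is a bijection. It preserves
alternation: for either pattern the board entries of an alternating permutation sit at valleys
(even positions), and every value allowed at a board cell is below the neighbouring entries.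
-/

open Finset

section RookPlacement

variable {ι κ : Type*} [LinearOrder ι] [LinearOrder κ] {s : Set (ι × κ)} {cols : Finset ι}
  {rows : Finset κ} {f g : ι → κ}

structure IsRookPlacement (s : Set (ι × κ)) (cols : Finset ι) (rows : Finset κ) (f : ι → κ) :
    Prop where
  bijOn : Set.BijOn f cols rows
  mem : ∀ i ∈ cols, (i, f i) ∈ s

def AvoidsInversionIn (s : Set (ι × κ)) (cols : Finset ι) (f : ι → κ) : Prop :=
  ∀ i ∈ cols, ∀ j ∈ cols, i < j → f j < f i → (j, f i) ∉ s

lemma AvoidsInversionIn.mono {t : Finset ι} (h : AvoidsInversionIn s cols f) (ht : t ⊆ cols) :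
    AvoidsInversionIn s t f :=
  fun i hi j hj => h i (ht hi) j (ht hj)

namespace IsRookPlacement

lemma comp_swap (hs : IsLowerSet s) (hf : IsRookPlacement s cols rows f) {c₁ c : ι}
    (hc₁ : c₁ ∈ cols) (hc : c ∈ cols) (hle : c₁ ≤ c) (hcr : (c, f c₁) ∈ s) :
    IsRookPlacement s cols rows (f ∘ Equiv.swap c₁ c) := by
  refine ⟨hf.bijOn.comp (Equiv.bijOn_swap hc₁ hc), fun i hi => ?_⟩
  rcases eq_or_ne i c₁ with rfl | hic₁
  · simpa using hs (Prod.mk_le_mk.2 ⟨hle, le_rfl⟩) (hf.mem c hc)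
  rcases eq_or_ne i c with rfl | hic
  · simpa using hcr
  · simpa [Equiv.swap_apply_of_ne_of_ne hic₁ hic] using hf.mem i hi

lemma erase (hf : IsRookPlacement s cols rows f) {c : ι} (hc : c ∈ cols) :
    IsRookPlacement s (cols.erase c) (rows.erase (f c)) f := by
  refine ⟨?_, fun i hi => hf.mem i (mem_of_mem_erase hi)⟩
  simpa only [coe_erase] using hf.bijOn.sdiff_singleton hc

lemma update {c : ι} {r : κ} (hf : IsRookPlacement s (cols.erase c) (rows.erase r) f)
    (hc : c ∈ cols) (hr : r ∈ rows) (hcr : (c, r) ∈ s) :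
    IsRookPlacement s cols rows (Function.update f c r) := by
  have hagree : Set.EqOn f (Function.update f c r) ↑(cols.erase c) := fun i hi =>
    (update_of_ne (ne_of_mem_erase hi) _ _).symm
  refine ⟨?_, fun i hi => ?_⟩
  · have := (hf.bijOn.congr hagree).insert (a := c) (by simp)
    rwa [update_self, ← coe_insert, ← coe_insert, insert_erase hc, insert_erase hr] at this
  · rcases eq_or_ne i c with rfl | hic
    · simpa using hcr
    · simpa [hic] using hf.mem i (mem_erase.2 ⟨hic, hi⟩)

lemma exists_corner (hf : IsRookPlacement s cols rows f) (hne : cols.Nonempty) :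
    ∃ r ∈ rows, (∀ r' ∈ rows, r' ≤ r) ∧
      ∃ c ∈ cols, (c, r) ∈ s ∧ ∀ j ∈ cols, (j, r) ∈ s → j ≤ c := by
  classical
  obtain ⟨i₀, hi₀⟩ := hne
  have hrows : rows.Nonempty := ⟨f i₀, hf.bijOn.mapsTo hi₀⟩
  obtain ⟨c₁, hc₁, hfc₁⟩ := hf.bijOn.surjOn (rows.max'_mem hrows)
  have hS : (cols.filter fun j => (j, rows.max' hrows) ∈ s).Nonempty :=
    ⟨c₁, mem_filter.2 ⟨hc₁, hfc₁ ▸ hf.mem c₁ hc₁⟩⟩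
  have hc := mem_filter.1 (max'_mem _ hS)
  exact ⟨_, rows.max'_mem hrows, rows.le_max', _, hc.1, hc.2,
    fun j hj hjr => le_max' _ j (mem_filter.2 ⟨hj, hjr⟩)⟩

theorem exists_avoidsInversionIn (hs : IsLowerSet s) (hg : IsRookPlacement s cols rows g) :
    ∃ f, IsRookPlacement s cols rows f ∧ AvoidsInversionIn s cols f := by
  induction cols using Finset.strongInduction generalizing rows g with
  | H cols ih =>
  obtain rfl | hne := cols.eq_empty_or_nonempty
  · exact ⟨g, hg, by simp [AvoidsInversionIn]⟩
  obtain ⟨r, hr, hr_max, c, hc, hcr, hc_max⟩ := hg.exists_corner hne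
  obtain ⟨c₁, hc₁, rfl⟩ := hg.bijOn.surjOn hr
  have hg' := (hg.comp_swap hs hc₁ hc (hc_max c₁ hc₁ (hg.mem c₁ hc₁)) hcr).erase hc
  rw [comp_apply, Equiv.swap_apply_right] at hg'
  obtain ⟨f, hf, hf_inv⟩ := ih _ (erase_ssubset hc) hg'
  refine ⟨Function.update f c (g c₁), hf.update hc hr hcr, fun i hi j hj hij hji hmem => ?_⟩
  have hic : i ≠ c := by
    rintro rfl
    rw [update_self] at hmem
    exact hij.not_ge (hc_max j hj hmem)
  rcases eq_or_ne j c with rfl | hjc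
  · rw [update_self, update_of_ne hic] at hji
    exact (hr_max _ (mem_of_mem_erase (hf.bijOn.mapsTo (mem_erase.2 ⟨hic, hi⟩)))).not_gt hji
  · simp only [update_of_ne hic, update_of_ne hjc] at hji hmem
    exact hf_inv i (mem_erase.2 ⟨hic, hi⟩) j (mem_erase.2 ⟨hjc, hj⟩) hij hji hmem

lemma apply_eq_of_avoidsInversionIn (hf : IsRookPlacement s cols rows f)
    (hf_inv : AvoidsInversionIn s cols f) {c : ι} {r : κ} (hc : c ∈ cols) (hr : r ∈ rows)
    (hr_max : ∀ r' ∈ rows, r' ≤ r) (hcr : (c, r) ∈ s)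
    (hc_max : ∀ j ∈ cols, (j, r) ∈ s → j ≤ c) : f c = r := by
  obtain ⟨c₁, hc₁, rfl⟩ := hf.bijOn.surjOn hr
  obtain rfl | hlt := (hc_max c₁ hc₁ (hf.mem c₁ hc₁)).eq_or_lt
  · rfl
  have hne : f c ≠ f c₁ := fun h => hlt.ne' (hf.bijOn.injOn hc hc₁ h)
  exact absurd hcr (hf_inv c₁ hc₁ c hc hlt ((hr_max _ (hf.bijOn.mapsTo hc)).lt_of_ne hne))

theorem eqOn_of_avoidsInversionIn (hf : IsRookPlacement s cols rows f)
    (hf_inv : AvoidsInversionIn s cols f) (hg : IsRookPlacement s cols rows g)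
    (hg_inv : AvoidsInversionIn s cols g) : Set.EqOn f g cols := by
  induction cols using Finset.strongInduction generalizing rows with
  | H cols ih =>
  obtain rfl | hne := cols.eq_empty_or_nonempty
  · simp
  obtain ⟨r, hr, hr_max, c, hc, hcr, hc_max⟩ := hf.exists_corner hne
  have hfc := hf.apply_eq_of_avoidsInversionIn hf_inv hc hr hr_max hcr hc_max
  have hgc := hg.apply_eq_of_avoidsInversionIn hg_inv hc hr hr_max hcr hc_max
  have hrest := ih _ (erase_ssubset hc) (hfc ▸ hf.erase hc) (hf_inv.mono (erase_subset c cols))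
    (hgc ▸ hg.erase hc) (hg_inv.mono (erase_subset c cols))
  intro i hi
  rcases eq_or_ne i c with rfl | hic
  · rw [hfc, hgc]
  · exact hrest (mem_erase.2 ⟨hic, hi⟩)

theorem exists_strictAntiOn (hs : IsLowerSet s) (hg : IsRookPlacement s cols rows g) :
    ∃ f, IsRookPlacement s cols rows f ∧ StrictAntiOn f cols := by
  induction cols using Finset.strongInduction generalizing rows g with
  | H cols ih =>
  obtain rfl | hne := cols.eq_empty_or_nonempty
  · exact ⟨g, hg, by simp [StrictAntiOn]⟩
  have hc := cols.max'_mem hne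
  have hrows : rows.Nonempty := ⟨g _, hg.bijOn.mapsTo hc⟩
  obtain ⟨c₁, hc₁, hgc₁⟩ := hg.bijOn.surjOn (rows.min'_mem hrows)
  have hcr : (cols.max' hne, g c₁) ∈ s := hs
    (Prod.mk_le_mk.2 ⟨le_rfl, hgc₁ ▸ rows.min'_le _ (hg.bijOn.mapsTo hc)⟩) (hg.mem _ hc)
  have hg' := (hg.comp_swap hs hc₁ hc (cols.le_max' c₁ hc₁) hcr).erase hc
  rw [comp_apply, Equiv.swap_apply_right] at hg'
  obtain ⟨f, hf, hf_anti⟩ := ih _ (erase_ssubset hc) hg'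
  refine ⟨Function.update f _ (g c₁), hf.update hc (hgc₁ ▸ rows.min'_mem hrows) hcr,
    fun i hi j hj hij => ?_⟩
  have hic : i ≠ cols.max' hne := (hij.trans_le (cols.le_max' j hj)).ne
  have hfi := hf.bijOn.mapsTo (mem_erase.2 ⟨hic, hi⟩)
  rcases eq_or_ne j (cols.max' hne) with rfl | hjc
  · simp only [update_self, update_of_ne hic]
    refine lt_of_le_of_ne ?_ (ne_of_mem_erase hfi).symm
    exact hgc₁ ▸ rows.min'_le _ (mem_of_mem_erase hfi)
  · simp only [update_of_ne hic, update_of_ne hjc]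
    exact hf_anti (mem_erase.2 ⟨hic, hi⟩) (mem_erase.2 ⟨hjc, hj⟩) hij

lemma apply_max'_eq_min' (hf : IsRookPlacement s cols rows f) (hf_anti : StrictAntiOn f cols)
    (hne : cols.Nonempty) (hrows : rows.Nonempty) : f (cols.max' hne) = rows.min' hrows := by
  obtain ⟨c₁, hc₁, hfc₁⟩ := hf.bijOn.surjOn (rows.min'_mem hrows)
  obtain h | hlt := (cols.le_max' c₁ hc₁).eq_or_lt
  · rw [← h, hfc₁]
  · have := hf_anti hc₁ (cols.max'_mem hne) hlt
    rw [hfc₁] at this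
    exact absurd this (rows.min'_le _ (hf.bijOn.mapsTo (cols.max'_mem hne))).not_gt

theorem eqOn_of_strictAntiOn (hf : IsRookPlacement s cols rows f)
    (hf_anti : StrictAntiOn f cols) (hg : IsRookPlacement s cols rows g)
    (hg_anti : StrictAntiOn g cols) : Set.EqOn f g cols := by
  induction cols using Finset.strongInduction generalizing rows with
  | H cols ih =>
  obtain rfl | hne := cols.eq_empty_or_nonempty
  · simp
  have hc := cols.max'_mem hne
  have hrows : rows.Nonempty := ⟨f _, hf.bijOn.mapsTo hc⟩
  have hfc := hf.apply_max'_eq_min' hf_anti hne hrows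
  have hgc := hg.apply_max'_eq_min' hg_anti hne hrows
  have hrest := ih _ (erase_ssubset hc) (hfc ▸ hf.erase hc)
    (hf_anti.mono (by simp)) (hgc ▸ hg.erase hc) (hg_anti.mono (by simp))
  intro i hi
  rcases eq_or_ne i (cols.max' hne) with rfl | hic
  · rw [hfc, hgc]
  · exact hrest (mem_erase.2 ⟨hic, hi⟩)

end IsRookPlacement
end RookPlacement

section Permutation

variable {n : ℕ} {p f : Fin n → Fin n}
  {P : Set (Fin n × Fin n) → Finset (Fin n) → (Fin n → Fin n) → Prop}

def ascentBoard (p : Fin n → Fin n) : Set (Fin n × Fin n) :=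
  {x | ∃ j₁ j₂, x.1 < j₁ ∧ j₁ < j₂ ∧ x.2 < p j₁ ∧ p j₁ < p j₂}

open Classical in
noncomputable def boardCols (p : Fin n → Fin n) : Finset (Fin n) :=
  {i | (i, p i) ∈ ascentBoard p}

noncomputable def boardRows (p : Fin n → Fin n) : Finset (Fin n) :=
  (boardCols p).image p

lemma mem_boardCols {i : Fin n} : i ∈ boardCols p ↔ (i, p i) ∈ ascentBoard p := by
  simp [boardCols]

lemma isLowerSet_ascentBoard (p : Fin n → Fin n) : IsLowerSet (ascentBoard p) := by
  rintro x y ⟨hy₁, hy₂⟩ ⟨j₁, j₂, h₁, h₁₂, hv, hp⟩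
  exact ⟨j₁, j₂, hy₁.trans_lt h₁, h₁₂, hy₂.trans_lt hv, hp⟩

lemma mem_ascentBoard_of_le_succ {c d r v : Fin n} (h : (c, r) ∈ ascentBoard p)
    (hd : d.1 ≤ c.1 + 1) (hdr : p d < r) (hv : v ≤ r) : (d, v) ∈ ascentBoard p := by
  obtain ⟨j₁, j₂, hcj : c < j₁, h₁₂, hr : r < p j₁, hp⟩ := h
  have hdj : d ≠ j₁ := by rintro rfl; exact (hdr.trans hr).false
  have hdj' : d < j₁ := by
    rw [Fin.lt_def] at hcj ⊢
    exact lt_of_le_of_ne (by omega) (Fin.val_ne_of_ne hdj)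
  exact ⟨j₁, j₂, hdj', h₁₂, hv.trans_lt hr, hp⟩

lemma exists_witness_not_mem_boardCols {x : Fin n × Fin n} (h : x ∈ ascentBoard p) :
    ∃ j₁ j₂, x.1 < j₁ ∧ j₁ < j₂ ∧ x.2 < p j₁ ∧ p j₁ < p j₂ ∧
      j₁ ∉ boardCols p ∧ j₂ ∉ boardCols p := by
  classical
  -- The lexicographically last witness works.
  let W : Finset (Fin n × Fin n) := {z | x.1 < z.1 ∧ z.1 < z.2 ∧ x.2 < p z.1 ∧ p z.1 < p z.2}
  obtain ⟨j₁, j₂, h⟩ := h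
  obtain ⟨⟨j₁, j₂⟩, hz, hmax⟩ := W.exists_max_image toLex ⟨(j₁, j₂), by simpa [W] using h⟩
  obtain ⟨h₁, h₁₂, hv, hp⟩ : x.1 < j₁ ∧ j₁ < j₂ ∧ x.2 < p j₁ ∧ p j₁ < p j₂ := by
    simpa [W] using hz
  refine ⟨j₁, j₂, h₁, h₁₂, hv, hp, fun hj₁ => ?_, fun hj₂ => ?_⟩
  · obtain ⟨l₁, l₂, g₁, g₁₂, gv, gp⟩ := mem_boardCols.1 hj₁
    have := hmax (l₁, l₂) (by simpa [W] using ⟨h₁.trans g₁, g₁₂, hv.trans gv, gp⟩)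
    exact this.not_gt (Prod.Lex.toLex_lt_toLex.2 (Or.inl g₁))
  · obtain ⟨l₁, l₂, g₁, g₁₂, gv, gp⟩ := mem_boardCols.1 hj₂
    have := hmax (j₁, l₁) (by simpa [W] using ⟨h₁, h₁₂.trans g₁, hv, hp.trans gv⟩)
    exact this.not_gt (Prod.Lex.toLex_lt_toLex.2 (Or.inr ⟨rfl, g₁⟩))

lemma isRookPlacement_self (hp : Injective p) :
    IsRookPlacement (ascentBoard p) (boardCols p) (boardRows p) p :=
  ⟨by simpa [boardRows] using hp.injOn.bijOn_image, fun _ hi => mem_boardCols.1 hi⟩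

lemma contains_of_strictMono {k : ℕ} {q : Fin k → Fin k} (hq : Injective q) {f : Fin k → Fin n}
    (hf : StrictMono f) (h : ∀ a b, q a < q b → p (f a) < p (f b)) : Contains p q := by
  refine ⟨f, hf, fun a b => ⟨h a b, fun hlt => ?_⟩⟩
  rcases lt_trichotomy (q a) (q b) with hab | hab | hab
  · exact hab
  · exact absurd hlt (by rw [hq hab]; exact lt_irrefl _)
  · exact absurd (h b a hab) hlt.not_gt

lemma contains_1234_iff :
    Contains p ![0, 1, 2, 3] ↔ ∃ i j, i < j ∧ p i < p j ∧ (j, p j) ∈ ascentBoard p := by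
  constructor
  · rintro ⟨f, hf, hq⟩
    exact ⟨f 0, f 1, hf (by decide), (hq 0 1).1 (by decide), f 2, f 3, hf (by decide),
      hf (by decide), (hq 1 2).1 (by decide), (hq 2 3).1 (by decide)⟩
  · rintro ⟨i, j, hij, hp, j₁, j₂, h₁, h₁₂, hp₁, hp₂⟩
    refine contains_of_strictMono (by decide) (f := ![i, j, j₁, j₂]) (by simp [*]) ?_
    intro a b hab
    fin_cases a <;> fin_cases b <;> simp at hab ⊢ <;> order

lemma contains_2134_iff :
    Contains p ![1, 0, 2, 3] ↔ ∃ i j, i < j ∧ p j < p i ∧ (j, p i) ∈ ascentBoard p := by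
  constructor
  · rintro ⟨f, hf, hq⟩
    exact ⟨f 0, f 1, hf (by decide), (hq 1 0).1 (by decide), f 2, f 3, hf (by decide),
      hf (by decide), (hq 0 2).1 (by decide), (hq 2 3).1 (by decide)⟩
  · rintro ⟨i, j, hij, hp, j₁, j₂, h₁, h₁₂, hp₁, hp₂⟩
    refine contains_of_strictMono (by decide) (f := ![i, j, j₁, j₂]) (by simp [*]) ?_
    intro a b hab
    fin_cases a <;> fin_cases b <;> simp at hab ⊢ <;> order

lemma avoids_1234_iff (hp : Injective p) :
    Avoids p ![0, 1, 2, 3] ↔ StrictAntiOn p (boardCols p) := by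
  refine ⟨fun hav i _ j hj hij => ?_, fun hanti hcon => ?_⟩
  · rcases lt_trichotomy (p i) (p j) with hlt | heq | hgt
    · exact absurd (contains_1234_iff.2 ⟨i, j, hij, hlt, mem_boardCols.1 hj⟩) hav
    · exact absurd (hp heq) hij.ne
    · exact hgt
  · obtain ⟨i, j, hij, hlt, hj⟩ := contains_1234_iff.1 hcon
    have hi : (i, p i) ∈ ascentBoard p :=
      isLowerSet_ascentBoard p (Prod.mk_le_mk.2 ⟨hij.le, hlt.le⟩) hj
    exact hlt.not_gt (hanti (mem_boardCols.2 hi) (mem_boardCols.2 hj) hij)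

lemma avoids_2134_iff :
    Avoids p ![1, 0, 2, 3] ↔ AvoidsInversionIn (ascentBoard p) (boardCols p) p := by
  refine ⟨fun hav i _ j _ hij hlt hji => hav (contains_2134_iff.2 ⟨i, j, hij, hlt, hji⟩),
    fun hinv hcon => ?_⟩
  obtain ⟨i, j, hij, hlt, hji⟩ := contains_2134_iff.1 hcon
  have hi : (i, p i) ∈ ascentBoard p :=
    isLowerSet_ascentBoard p (Prod.mk_le_mk.2 ⟨hij.le, le_rfl⟩) hji
  have hj : (j, p j) ∈ ascentBoard p :=
    isLowerSet_ascentBoard p (Prod.mk_le_mk.2 ⟨le_rfl, hlt.le⟩) hji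
  exact hinv i (mem_boardCols.2 hi) j (mem_boardCols.2 hj) hij hlt hji

lemma Alternating.lt_iff (halt : Alternating p) {a b : Fin n} (hab : a.1 + 1 = b.1) :
    p a < p b ↔ a.1 % 2 = 0 := by
  obtain ⟨a, ha⟩ := a
  obtain ⟨b, hb⟩ := b
  obtain rfl : a + 1 = b := hab
  exact halt a hb

lemma mod_two_eq_zero_of_avoids_1234 (halt : Alternating p) (hav : Avoids p ![0, 1, 2, 3])
    {i : Fin n} (hi : i ∈ boardCols p) : i.1 % 2 = 0 := by
  by_contra hodd
  let a : Fin n := ⟨i.1 - 1, by omega⟩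
  have hai : a.1 + 1 = i.1 := by simp [a]; omega
  have hlt : p a < p i := (halt.lt_iff hai).2 (by omega)
  exact hav (contains_1234_iff.2 ⟨a, i, Fin.lt_def.2 (by omega), hlt, mem_boardCols.1 hi⟩)

lemma mod_two_eq_zero_of_avoids_2134 (halt : Alternating p) (hp : Injective p)
    (hav : Avoids p ![1, 0, 2, 3]) {i : Fin n} (hi : i ∈ boardCols p) : i.1 % 2 = 0 := by
  by_contra hodd
  obtain ⟨j₁, -, hij₁ : i < j₁, -⟩ := mem_boardCols.1 hi
  let b : Fin n := ⟨i.1 + 1, by have := j₁.2; rw [Fin.lt_def] at hij₁; omega⟩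
  have hne : p b ≠ p i := fun h => by simpa [b, Fin.ext_iff] using hp h
  have hlt : p b < p i := lt_of_le_of_ne (not_lt.1 fun h => hodd ((halt.lt_iff rfl).1 h)) hne
  exact hav (contains_2134_iff.2
    ⟨i, b, Fin.lt_def.2 (by simp [b]), hlt,
      mem_ascentBoard_of_le_succ (mem_boardCols.1 hi) le_rfl hlt le_rfl⟩)

lemma ascentBoard_piecewise
    (hf : IsRookPlacement (ascentBoard p) (boardCols p) (boardRows p) f) :
    ascentBoard ((boardCols p).piecewise f p) = ascentBoard p := by
  ext x
  constructor
  · rintro ⟨j₁, j₂, h₁, h₁₂, hv, hp⟩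
    by_cases hj₁ : j₁ ∈ boardCols p
    · rw [piecewise_eq_of_mem _ _ _ hj₁] at hv
      exact isLowerSet_ascentBoard p (Prod.mk_le_mk.2 ⟨h₁.le, hv.le⟩) (hf.mem j₁ hj₁)
    rw [piecewise_eq_of_notMem _ _ _ hj₁] at hv hp
    by_cases hj₂ : j₂ ∈ boardCols p
    · rw [piecewise_eq_of_mem _ _ _ hj₂] at hp
      exact isLowerSet_ascentBoard p (Prod.mk_le_mk.2 ⟨(h₁.trans h₁₂).le, (hv.trans hp).le⟩)
        (hf.mem j₂ hj₂)
    · rw [piecewise_eq_of_notMem _ _ _ hj₂] at hp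
      exact ⟨j₁, j₂, h₁, h₁₂, hv, hp⟩
  · intro hx
    obtain ⟨j₁, j₂, h₁, h₁₂, hv, hp, hj₁, hj₂⟩ := exists_witness_not_mem_boardCols hx
    refine ⟨j₁, j₂, h₁, h₁₂, ?_, ?_⟩ <;>
      simpa only [piecewise_eq_of_notMem _ _ _ hj₁, piecewise_eq_of_notMem _ _ _ hj₂]

lemma boardCols_piecewise
    (hf : IsRookPlacement (ascentBoard p) (boardCols p) (boardRows p) f) :
    boardCols ((boardCols p).piecewise f p) = boardCols p := by
  ext i
  rw [mem_boardCols, mem_boardCols, ascentBoard_piecewise hf]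
  by_cases hi : i ∈ boardCols p
  · rw [piecewise_eq_of_mem _ _ _ hi]
    exact iff_of_true (hf.mem i hi) (mem_boardCols.1 hi)
  · rw [piecewise_eq_of_notMem _ _ _ hi]

lemma boardRows_piecewise
    (hf : IsRookPlacement (ascentBoard p) (boardCols p) (boardRows p) f) :
    boardRows ((boardCols p).piecewise f p) = boardRows p := by
  have hagree : Set.EqOn ((boardCols p).piecewise f p) f (boardCols p) :=
    fun i hi => piecewise_eq_of_mem _ _ _ hi
  rw [boardRows, boardCols_piecewise hf, image_congr hagree, ← coe_inj, coe_image,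
    hf.bijOn.image_eq]

lemma bijective_piecewise (hp : Injective p)
    (hf : IsRookPlacement (ascentBoard p) (boardCols p) (boardRows p) f) :
    Bijective ((boardCols p).piecewise f p) := by
  refine Finite.injective_iff_bijective.1 ?_
  rw [← piecewise_coe, Set.injective_piecewise_iff]
  refine ⟨hf.bijOn.injOn, hp.injOn, fun x hx y hy hxy => ?_⟩
  obtain ⟨z, hz, hzx⟩ := mem_image.1 (hf.bijOn.mapsTo hx)
  exact hy (hp (hzx.trans hxy) ▸ hz)

lemma lt_of_adjacent_mem_boardCols (hp : Injective p) (hpar : ∀ i ∈ boardCols p, i.1 % 2 = 0)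
    (hf : IsRookPlacement (ascentBoard p) (boardCols p) (boardRows p) f) {c d : Fin n}
    (hc : c ∈ boardCols p) (hadj : d.1 + 1 = c.1 ∨ c.1 + 1 = d.1) : f c < p d := by
  have hd : d ∉ boardCols p := fun hd => by
    have := hpar c hc
    have := hpar d hd
    omega
  have hne : f c ≠ p d := fun h => by
    obtain ⟨z, hz, hzc⟩ := mem_image.1 (hf.bijOn.mapsTo hc)
    exact hd (hp (hzc.trans h) ▸ hz)
  -- Otherwise the cell `(d, p d)` would lie on the board, next to the board column `c`.
  refine lt_of_not_ge fun hle => hd (mem_boardCols.2 ?_)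
  exact mem_ascentBoard_of_le_succ (hf.mem c hc) (by omega) (hle.lt_of_ne hne.symm) hle

lemma alternating_piecewise (hp : Injective p) (halt : Alternating p)
    (hpar : ∀ i ∈ boardCols p, i.1 % 2 = 0)
    (hf : IsRookPlacement (ascentBoard p) (boardCols p) (boardRows p) f) :
    Alternating ((boardCols p).piecewise f p) := by
  intro i h
  by_cases ha : (⟨i, by omega⟩ : Fin n) ∈ boardCols p
  · have hb : (⟨i + 1, h⟩ : Fin n) ∉ boardCols p := fun hb => by
      have : i % 2 = 0 := hpar _ ha
      have : (i + 1) % 2 = 0 := hpar _ hb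
      omega
    rw [piecewise_eq_of_mem _ _ _ ha, piecewise_eq_of_notMem _ _ _ hb]
    exact iff_of_true (lt_of_adjacent_mem_boardCols hp hpar hf ha (Or.inr rfl)) (hpar _ ha)
  by_cases hb : (⟨i + 1, h⟩ : Fin n) ∈ boardCols p
  · rw [piecewise_eq_of_notMem _ _ _ ha, piecewise_eq_of_mem _ _ _ hb]
    have : (i + 1) % 2 = 0 := hpar _ hb
    exact iff_of_false (lt_of_adjacent_mem_boardCols hp hpar hf hb (Or.inl rfl)).not_gt (by omega)
  · rw [piecewise_eq_of_notMem _ _ _ ha, piecewise_eq_of_notMem _ _ _ hb]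
    exact halt i h

-- `ε` picks the placement; when no placement satisfies `P` its choice is arbitrary.
noncomputable def refill (P : Set (Fin n × Fin n) → Finset (Fin n) → (Fin n → Fin n) → Prop)
    (p : Fin n → Fin n) : Fin n → Fin n :=
  (boardCols p).piecewise (@Classical.epsilon _ ⟨p⟩ fun f =>
    IsRookPlacement (ascentBoard p) (boardCols p) (boardRows p) f ∧
      P (ascentBoard p) (boardCols p) f) p

lemma exists_refill_eq (h : ∃ f, IsRookPlacement (ascentBoard p) (boardCols p) (boardRows p) f ∧
      P (ascentBoard p) (boardCols p) f) :
    ∃ f, (IsRookPlacement (ascentBoard p) (boardCols p) (boardRows p) f ∧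
      P (ascentBoard p) (boardCols p) f) ∧ refill P p = (boardCols p).piecewise f p :=
  ⟨_, Classical.epsilon_spec h, rfl⟩

lemma refill_piecewise (hf : IsRookPlacement (ascentBoard p) (boardCols p) (boardRows p) f) :
    refill P ((boardCols p).piecewise f p) = refill P p := by
  rw [refill, refill, ascentBoard_piecewise hf, boardCols_piecewise hf, boardRows_piecewise hf,
    piecewise_idem_right]

lemma refill_eq_self (hp : IsRookPlacement (ascentBoard p) (boardCols p) (boardRows p) p)
    (hP : P (ascentBoard p) (boardCols p) p)
    (huniq : ∀ f, IsRookPlacement (ascentBoard p) (boardCols p) (boardRows p) f →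
      P (ascentBoard p) (boardCols p) f → Set.EqOn f p (boardCols p)) :
    refill P p = p := by
  obtain ⟨f, ⟨hf, hfP⟩, hrefill⟩ := exists_refill_eq ⟨p, hp, hP⟩
  rw [hrefill]
  exact ((boardCols p).piecewise_congr (fun i hi => huniq f hf hfP hi) fun _ _ => rfl).trans
    (piecewise_same _ _)

noncomputable def toAvoiding2134 : (Fin n → Fin n) → Fin n → Fin n :=
  refill AvoidsInversionIn

noncomputable def toAvoiding1234 : (Fin n → Fin n) → Fin n → Fin n :=
  refill fun _ cols f => StrictAntiOn f cols

lemma toAvoiding2134_spec (hp : Bijective p) (halt : Alternating p)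
    (hav : Avoids p ![0, 1, 2, 3]) :
    Bijective (toAvoiding2134 p) ∧ Alternating (toAvoiding2134 p) ∧
      Avoids (toAvoiding2134 p) ![1, 0, 2, 3] := by
  obtain ⟨f, ⟨hf, hf_inv⟩, hq⟩ := exists_refill_eq
    ((isRookPlacement_self hp.1).exists_avoidsInversionIn (isLowerSet_ascentBoard p))
  rw [toAvoiding2134, hq, avoids_2134_iff, ascentBoard_piecewise hf, boardCols_piecewise hf]
  refine ⟨bijective_piecewise hp.1 hf, alternating_piecewise hp.1 halt
    (fun i hi => mod_two_eq_zero_of_avoids_1234 halt hav hi) hf, fun i hi j hj => ?_⟩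
  simpa only [piecewise_eq_of_mem _ _ _ hi, piecewise_eq_of_mem _ _ _ hj] using hf_inv i hi j hj

lemma toAvoiding1234_spec (hp : Bijective p) (halt : Alternating p)
    (hav : Avoids p ![1, 0, 2, 3]) :
    Bijective (toAvoiding1234 p) ∧ Alternating (toAvoiding1234 p) ∧
      Avoids (toAvoiding1234 p) ![0, 1, 2, 3] := by
  obtain ⟨f, ⟨hf, hf_anti⟩, hq⟩ := exists_refill_eq (P := fun _ cols f => StrictAntiOn f cols)
    ((isRookPlacement_self hp.1).exists_strictAntiOn (isLowerSet_ascentBoard p))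
  rw [toAvoiding1234, hq, avoids_1234_iff (bijective_piecewise hp.1 hf).1,
    boardCols_piecewise hf]
  refine ⟨bijective_piecewise hp.1 hf, alternating_piecewise hp.1 halt
    (fun i hi => mod_two_eq_zero_of_avoids_2134 halt hp.1 hav hi) hf, ?_⟩
  exact hf_anti.congr fun i hi => (piecewise_eq_of_mem _ _ _ hi).symm

lemma toAvoiding1234_toAvoiding2134 (hp : Injective p) (hav : Avoids p ![0, 1, 2, 3]) :
    toAvoiding1234 (toAvoiding2134 p) = p := by
  have hself := isRookPlacement_self hp
  obtain ⟨f, ⟨hf, -⟩, hq⟩ := exists_refill_eq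
    (hself.exists_avoidsInversionIn (isLowerSet_ascentBoard p))
  have hanti := (avoids_1234_iff hp).1 hav
  rw [toAvoiding2134, hq, toAvoiding1234, refill_piecewise hf]
  exact refill_eq_self hself hanti fun g hg hg_anti => hg.eqOn_of_strictAntiOn hg_anti hself hanti

lemma toAvoiding2134_toAvoiding1234 (hp : Injective p) (hav : Avoids p ![1, 0, 2, 3]) :
    toAvoiding2134 (toAvoiding1234 p) = p := by
  have hself := isRookPlacement_self hp
  obtain ⟨f, ⟨hf, -⟩, hq⟩ := exists_refill_eq (P := fun _ cols f => StrictAntiOn f cols)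
    (hself.exists_strictAntiOn (isLowerSet_ascentBoard p))
  have hinv := avoids_2134_iff.1 hav
  rw [toAvoiding1234, hq, toAvoiding2134, refill_piecewise hf]
  exact refill_eq_self hself hinv fun g hg hg_inv =>
    hg.eqOn_of_avoidsInversionIn hg_inv hself hinv

noncomputable def avoiding1234EquivAvoiding2134 (n : ℕ) :
    {p : Fin n → Fin n // Bijective p ∧ Alternating p ∧ Avoids p ![0, 1, 2, 3]} ≃
      {p : Fin n → Fin n // Bijective p ∧ Alternating p ∧ Avoids p ![1, 0, 2, 3]} where
  toFun p := ⟨toAvoiding2134 p, toAvoiding2134_spec p.2.1 p.2.2.1 p.2.2.2⟩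
  invFun q := ⟨toAvoiding1234 q, toAvoiding1234_spec q.2.1 q.2.2.1 q.2.2.2⟩
  left_inv p := Subtype.ext (toAvoiding1234_toAvoiding2134 p.2.1.1 p.2.2.2)
  right_inv q := Subtype.ext (toAvoiding2134_toAvoiding1234 q.2.1.1 q.2.2.2)

end Permutation

theorem stmt15_general (n : ℕ) :
    Nat.card {p : Fin n → Fin n // Function.Bijective p ∧ Alternating p ∧
      Avoids p (![0, 1, 2, 3] : Fin 4 → Fin 4)} =
    Nat.card {p : Fin n → Fin n // Function.Bijective p ∧ Alternating p ∧
      Avoids p (![1, 0, 2, 3] : Fin 4 → Fin 4)} :=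
  Nat.card_congr (avoiding1234EquivAvoiding2134 n)

theorem stmt15 (n : ℕ) (hn : 0 < n) :
    Nat.card {p : Fin n → Fin n // Function.Bijective p ∧ Alternating p ∧
      Avoids p (![0, 1, 2, 3] : Fin 4 → Fin 4)} =
    Nat.card {p : Fin n → Fin n // Function.Bijective p ∧ Alternating p ∧
      Avoids p (![1, 0, 2, 3] : Fin 4 → Fin 4)} :=
  stmt15_general n
end
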